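/- arXiv:2410.23316 — 6 statements merged into one kernel-verified Lean document; each statement's English description precedes it below -/
import Mathlib

section
/- If Λ is a locally finite preordered set and S' ⊆ Λ is a finite subset, then the preordered set Λ + S', obtained by adding the relations making all elements of S' equivalent (and taking the transitive closure), is again locally finite. -/
/-- The preorder `≼₊` on `Λ + S`: `s₁ ≼₊ s₂` iff `s₁ ≼ s₂`, or there are `t, q ∈ S`
with `s₁ ≼ t` and `q ≼ s₂`.  This is the smallest preorder containing `≼` in which all
elements of `S` are equivalent. -/
def LePlus {Λ : Type*} [Preorder Λ] (S : Set Λ) (s₁ s₂ : Λ) : Prop :=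
  s₁ ≤ s₂ ∨ ∃ t ∈ S, ∃ q ∈ S, s₁ ≤ t ∧ q ≤ s₂

/-- If `Λ` is a locally finite preordered set and `S' ⊆ Λ` is finite, then the
preordered set `Λ + S'` is again locally finite. -/
theorem stmt3 {Λ : Type*} [Preorder Λ]
    (hloc : ∀ s₁ s₂ : Λ, (Set.Icc s₁ s₂).Finite)
    (S' : Set Λ) (hS' : S'.Finite) :
    ∀ s₁ s₂ : Λ, {t : Λ | LePlus S' s₁ t ∧ LePlus S' t s₂}.Finite := by
  intro s₁ s₂
  have hfin : (⋃ a ∈ insert s₁ S', ⋃ b ∈ insert s₂ S', Set.Icc a b).Finite :=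
    (hS'.insert s₁).biUnion fun a _ => (hS'.insert s₂).biUnion fun b _ => hloc a b
  refine hfin.subset ?_
  rintro t ⟨h₁, h₂⟩
  obtain (ha : s₁ ≤ t) | ⟨_, _, q, hq, _, hqt⟩ := h₁ <;>
    obtain (hb : t ≤ s₂) | ⟨r, hr, _, _, htr, _⟩ := h₂
  · exact Set.mem_biUnion (Set.mem_insert _ _) (Set.mem_biUnion (Set.mem_insert _ _) ⟨ha, hb⟩)
  · exact Set.mem_biUnion (Set.mem_insert _ _)
      (Set.mem_biUnion (Set.mem_insert_of_mem _ hr) ⟨ha, htr⟩)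
  · exact Set.mem_biUnion (Set.mem_insert_of_mem _ hq)
      (Set.mem_biUnion (Set.mem_insert _ _) ⟨hqt, hb⟩)
  · exact Set.mem_biUnion (Set.mem_insert_of_mem _ hq)
      (Set.mem_biUnion (Set.mem_insert_of_mem _ hr) ⟨hqt, htr⟩)
end

section
/- Let Λ be a locally finite preordered set and P a commutative ring. A matrix A ∈ M_Λ(P) is invertible if and only if for every s ∈ Λ the finite submatrix of A indexed by the equivalence class [s,s] is invertible as a finite square matrix over P. -/
/-!
If `t₁` and `t₂` lie in the class `[s, s]`, the interval `[t₁, t₂]` is the whole class, so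
restriction to `[s, s]` is multiplicative and units restrict to units.

Conversely, a right inverse `B` of `A` is built by well-founded recursion on `#[a, b]`: the
entries `B x b` with `x` in the class of `a` are obtained from the inverse of the diagonal block
at `a` and the entries `B y b` with `y` strictly above `a`. The diagonal blocks of `B` are then
right inverses of those of `A`, hence invertible, so `B` has a right inverse too, and an element
with a right inverse that itself has a right inverse is a unit.
-/

open Finset

namespace IncidenceAlgebra

variable {Λ P : Type*} [Preorder Λ]

def block [Zero P] (A : IncidenceAlgebra P Λ) (S : Finset Λ) : Matrix S S P :=
  Matrix.of fun t₁ t₂ => A t₁ t₂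

section BlockInv

variable [DecidableEq Λ] [CommRing P]

noncomputable def blockInv (A : IncidenceAlgebra P Λ) (S : Finset Λ) (u z : Λ) : P :=
  if h : u ∈ S ∧ z ∈ S then (block A S)⁻¹ ⟨u, h.1⟩ ⟨z, h.2⟩ else 0

lemma sum_mul_blockInv {A : IncidenceAlgebra P Λ} {S : Finset Λ} (hA : IsUnit (block A S))
    {x z : Λ} (hx : x ∈ S) (hz : z ∈ S) :
    ∑ u ∈ S, A x u * blockInv A S u z = if x = z then 1 else 0 := by
  have hinv := congrFun (congrFun
    (Matrix.mul_nonsing_inv _ ((Matrix.isUnit_iff_isUnit_det _).1 hA)) ⟨x, hx⟩) ⟨z, hz⟩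
  rw [Matrix.mul_apply, Matrix.one_apply] at hinv
  simp only [Subtype.mk.injEq] at hinv
  rw [← hinv, ← sum_coe_sort S]
  refine sum_congr rfl fun u _ => ?_
  simp only [blockInv, dif_pos (And.intro u.2 hz), block, Matrix.of_apply]

end BlockInv

variable [LocallyFiniteOrder Λ]

lemma Icc_congr_left {a x : Λ} (hx : x ∈ Icc a a) (c : Λ) : Icc x c = Icc a c := by
  obtain ⟨hax, hxa⟩ := mem_Icc.1 hx
  ext y
  simp only [mem_Icc]
  exact ⟨fun h => ⟨hax.trans h.1, h.2⟩, fun h => ⟨hxa.trans h.1, h.2⟩⟩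

lemma Icc_congr_right {a x : Λ} (hx : x ∈ Icc a a) (c : Λ) : Icc c x = Icc c a := by
  obtain ⟨hax, hxa⟩ := mem_Icc.1 hx
  ext y
  simp only [mem_Icc]
  exact ⟨fun h => ⟨h.1, h.2.trans hxa⟩, fun h => ⟨h.1, h.2.trans hax⟩⟩

lemma block_mul [Semiring P] (A B : IncidenceAlgebra P Λ) (s : Λ) :
    block (A * B) (Icc s s) = block A (Icc s s) * block B (Icc s s) := by
  ext t₁ t₂
  have hIcc : Icc (t₁ : Λ) t₂ = Icc s s := by
    rw [Icc_congr_left t₁.2, Icc_congr_right t₂.2]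
  simp only [block, Matrix.of_apply, mul_apply, hIcc, Matrix.mul_apply]
  exact (sum_coe_sort (Icc s s) fun x => A t₁ x * B x t₂).symm

variable [DecidableEq Λ]

lemma card_Icc_lt_of_mem_Icc_sdiff {a b y : Λ} (hy : y ∈ Icc a b \ Icc a a) :
    #(Icc y b) < #(Icc a b) := by
  simp only [mem_sdiff, mem_Icc, not_and] at hy
  obtain ⟨⟨hay, hyb⟩, hya⟩ := hy
  exact card_lt_card (Icc_ssubset_Icc_left (hay.trans hyb) (lt_of_le_not_ge hay (hya hay)) le_rfl)

lemma block_one [Semiring P] (s : Λ) : block (1 : IncidenceAlgebra P Λ) (Icc s s) = 1 := by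
  ext t₁ t₂
  simp only [block, Matrix.of_apply, one_apply, Matrix.one_apply, Subtype.ext_iff]

def blockHom [Semiring P] (s : Λ) : IncidenceAlgebra P Λ →* Matrix (Icc s s) (Icc s s) P where
  toFun A := block A (Icc s s)
  map_one' := block_one s
  map_mul' A B := block_mul A B s

variable [CommRing P]

noncomputable def rightInvFun (A : IncidenceAlgebra P Λ) : Λ → Λ → P
  | a, b => ∑ u ∈ Icc a a, blockInv A (Icc a a) a u *
      ((if u = b then 1 else 0) -
        ∑ y ∈ (Icc a b \ Icc a a).attach, A u y * rightInvFun A y b)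
termination_by a b => #(Icc a b)
decreasing_by exact card_Icc_lt_of_mem_Icc_sdiff y.2

lemma rightInvFun_eq (A : IncidenceAlgebra P Λ) (a b : Λ) :
    rightInvFun A a b = ∑ u ∈ Icc a a, blockInv A (Icc a a) a u *
      ((if u = b then 1 else 0) - ∑ y ∈ Icc a b \ Icc a a, A u y * rightInvFun A y b) := by
  rw [rightInvFun]
  refine sum_congr rfl fun u _ => ?_
  rw [sum_attach (Icc a b \ Icc a a) fun y => A u y * rightInvFun A y b]

lemma rightInvFun_eq_of_mem (A : IncidenceAlgebra P Λ) {a x : Λ} (hx : x ∈ Icc a a) (b : Λ) :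
    rightInvFun A x b = ∑ u ∈ Icc a a, blockInv A (Icc a a) x u *
      ((if u = b then 1 else 0) - ∑ y ∈ Icc a b \ Icc a a, A u y * rightInvFun A y b) := by
  rw [rightInvFun_eq]
  simp only [Icc_congr_left hx, Icc_congr_right hx]

lemma rightInvFun_of_not_le (A : IncidenceAlgebra P Λ) {a b : Λ} (hab : ¬ a ≤ b) :
    rightInvFun A a b = 0 := by
  rw [rightInvFun_eq, Icc_eq_empty hab]
  simp only [empty_sdiff, sum_empty]
  refine sum_eq_zero fun u hu => ?_
  have hub : u ≠ b := by
    rintro rfl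
    exact hab (mem_Icc.1 hu).1
  rw [if_neg hub, sub_zero, mul_zero]

noncomputable def rightInv (A : IncidenceAlgebra P Λ) : IncidenceAlgebra P Λ :=
  ⟨rightInvFun A, fun _ _ => rightInvFun_of_not_le A⟩

lemma mul_rightInv {A : IncidenceAlgebra P Λ} (hA : ∀ s : Λ, IsUnit (block A (Icc s s))) :
    A * rightInv A = 1 := by
  ext a b hab
  set B := rightInv A
  set R : Λ → P := fun u => (if u = b then 1 else 0) - ∑ y ∈ Icc a b \ Icc a a, A u y * B y b
  have hsplit : (A * B) a b =
      ∑ y ∈ Icc a b \ Icc a a, A a y * B y b + ∑ x ∈ Icc a a, A a x * B x b := by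
    rw [mul_apply, sum_sdiff (Icc_subset_Icc_right hab)]
  have hclass : ∑ x ∈ Icc a a, A a x * B x b = R a := by
    calc ∑ x ∈ Icc a a, A a x * B x b
        = ∑ x ∈ Icc a a, ∑ u ∈ Icc a a, A a x * blockInv A (Icc a a) x u * R u := by
          refine sum_congr rfl fun x hx => ?_
          rw [show B x b = rightInvFun A x b from rfl, rightInvFun_eq_of_mem A hx, mul_sum]
          simp only [mul_assoc]
          rfl
      _ = ∑ u ∈ Icc a a, (if a = u then 1 else 0) * R u := by
          rw [sum_comm]
          refine sum_congr rfl fun u hu => ?_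
          rw [← sum_mul, sum_mul_blockInv (hA a) (mem_Icc.2 ⟨le_rfl, le_rfl⟩) hu]
      _ = R a := by simp
  rw [hsplit, hclass, one_apply]
  simp only [R]
  ring

lemma isUnit_block_rightInv {A : IncidenceAlgebra P Λ}
    (hA : ∀ s : Λ, IsUnit (block A (Icc s s))) (s : Λ) :
    IsUnit (block (rightInv A) (Icc s s)) := by
  rw [Matrix.isUnit_iff_isUnit_det]
  refine Matrix.isUnit_det_of_left_inverse (B := block A (Icc s s)) ?_
  rw [← block_mul, mul_rightInv hA, block_one]

end IncidenceAlgebra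

/-- For a locally finite preordered set `Λ` and a commutative ring `P`, a matrix
`A ∈ M_Λ(P)` is invertible if and only if, for every `s ∈ Λ`, the finite submatrix of
`A` indexed by the equivalence class `[s,s] = {t : s ≼ t ∧ t ≼ s}` is invertible as a
finite square matrix over `P`. -/
theorem stmt8 {Λ P : Type*} [Preorder Λ] [LocallyFiniteOrder Λ] [DecidableEq Λ]
    [CommRing P] (A : IncidenceAlgebra P Λ) :
    IsUnit A ↔ ∀ s : Λ,
      IsUnit (Matrix.of fun t₁ t₂ : ↥(Finset.Icc s s) => A (t₁ : Λ) (t₂ : Λ)) := by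
  refine ⟨fun h s => h.map (IncidenceAlgebra.blockHom s), fun hA => ?_⟩
  have hAB : A * A.rightInv = 1 := IncidenceAlgebra.mul_rightInv hA
  have hBD : A.rightInv * A.rightInv.rightInv = 1 :=
    IncidenceAlgebra.mul_rightInv (IncidenceAlgebra.isUnit_block_rightInv hA)
  have hBA : A.rightInv * A = 1 :=
    (congrArg (A.rightInv * ·) (left_inv_eq_right_inv hAB hBD)).trans hBD
  exact ⟨⟨A, A.rightInv, hAB, hBA⟩, rfl⟩
end

section
/- Let Λ be a finite irreducible preordered set and P a commutative ring admitting units p₁, p₂ ∈ P* with p₁ − p₂ ∈ P*. Then a matrix A ∈ GL_Λ(P) lies in the center of GL_Λ(P) if and only if A is scalar, i.e., A_{s,s} = A_{t,t} for all s, t ∈ Λ and A_{s,t} = 0 for s ≠ t. -/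
open Finset

namespace Stmt10Aux
variable {Λ P : Type*} [Preorder Λ] [Fintype Λ] [DecidableEq Λ]
    [LocallyFiniteOrder Λ] [CommRing P]

/-- The matrix unit `e_{s t}` for `s ≤ t`. -/
def single (s t : Λ) (h : s ≤ t) : IncidenceAlgebra P Λ :=
  ⟨fun a b => if a = s ∧ b = t then 1 else 0, by
    intro a b hab
    simp only [ite_eq_right_iff, and_imp]
    rintro rfl rfl
    exact absurd h hab⟩

@[simp] lemma single_apply (s t : Λ) (h : s ≤ t) (a b : Λ) :
    (single (P := P) s t h) a b = if a = s ∧ b = t then 1 else 0 := rfl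

lemma single_mul_apply (s t : Λ) (h : s ≤ t) (f : IncidenceAlgebra P Λ) (b : Λ)
    (hsb : s ≤ b) (htb : t ≤ b) : (single s t h * f : IncidenceAlgebra P Λ) s b = f t b := by
  rw [IncidenceAlgebra.mul_apply]
  rw [Finset.sum_eq_single_of_mem t (mem_Icc.2 ⟨h, htb⟩)]
  · simp
  · intro x hx hxt
    simp [hxt]

lemma mul_single_apply (s t : Λ) (h : s ≤ t) (f : IncidenceAlgebra P Λ) (a : Λ)
    (has : a ≤ s) (hat : a ≤ t) : (f * single s t h : IncidenceAlgebra P Λ) a t = f a s := by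
  rw [IncidenceAlgebra.mul_apply]
  rw [Finset.sum_eq_single_of_mem s (mem_Icc.2 ⟨has, h⟩)]
  · simp
  · intro x hx hxs
    simp [hxs]

lemma single_mul_single (s t : Λ) (h : s ≤ t) (hne : s ≠ t) :
    (single (P := P) s t h) * single s t h = 0 := by
  ext a b _
  rw [IncidenceAlgebra.mul_apply, IncidenceAlgebra.zero_apply]
  refine Finset.sum_eq_zero fun x _ => ?_
  by_cases hx : x = t
  · subst hx
    simp [Ne.symm hne]
  · simp [hx]

/-- `1 + e_{s t}` as a unit. -/
def singleUnit (s t : Λ) (h : s ≤ t) (hne : s ≠ t) : (IncidenceAlgebra P Λ)ˣ where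
  val := 1 + single s t h
  inv := 1 - single s t h
  val_inv := by
    rw [add_mul, one_mul, mul_sub, mul_one, single_mul_single s t h hne]
    abel
  inv_val := by
    rw [sub_mul, one_mul, mul_add, mul_one, single_mul_single s t h hne]
    abel

/-- Diagonal matrix with unit entries. -/
def diag (d : Λ → Pˣ) : IncidenceAlgebra P Λ :=
  ⟨fun a b => if a = b then (d a : P) else 0, by
    intro a b hab
    simp only [ite_eq_right_iff]
    rintro rfl
    exact absurd le_rfl hab⟩

@[simp] lemma diag_apply (d : Λ → Pˣ) (a b : Λ) :
    (diag (P := P) d) a b = if a = b then (d a : P) else 0 := rfl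

lemma diag_mul_apply (d : Λ → Pˣ) (f : IncidenceAlgebra P Λ) (a b : Λ) (hab : a ≤ b) :
    (diag d * f) a b = (d a : P) * f a b := by
  rw [IncidenceAlgebra.mul_apply]
  rw [Finset.sum_eq_single_of_mem a (mem_Icc.2 ⟨le_rfl, hab⟩)]
  · simp
  · intro x hx hxa
    simp [Ne.symm hxa]

lemma mul_diag_apply (d : Λ → Pˣ) (f : IncidenceAlgebra P Λ) (a b : Λ) (hab : a ≤ b) :
    (f * diag d) a b = f a b * (d b : P) := by
  rw [IncidenceAlgebra.mul_apply]
  rw [Finset.sum_eq_single_of_mem b (mem_Icc.2 ⟨hab, le_rfl⟩)]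
  · simp
  · intro x hx hxb
    simp [hxb]

/-- Diagonal unit. -/
def diagUnit (d : Λ → Pˣ) : (IncidenceAlgebra P Λ)ˣ where
  val := diag d
  inv := diag fun a => (d a)⁻¹
  val_inv := by
    ext a b hab
    rw [diag_mul_apply _ _ _ _ hab]
    simp only [diag_apply, IncidenceAlgebra.one_apply]
    split_ifs with hh
    · subst hh; simp
    · simp
  inv_val := by
    ext a b hab
    rw [diag_mul_apply _ _ _ _ hab]
    simp only [diag_apply, IncidenceAlgebra.one_apply]
    split_ifs with hh
    · subst hh; simp
    · simp

end Stmt10Aux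

open Stmt10Aux in
/-- Let `Λ` be a finite irreducible preordered set (any two elements are joined by a
chain of comparabilities) and `P` a commutative ring with units `p₁, p₂` whose
difference is a unit.  Then `A ∈ GL_Λ(P)` is central if and only if `A` is scalar. -/
theorem stmt10 {Λ P : Type*} [Preorder Λ] [Fintype Λ] [DecidableEq Λ]
    [LocallyFiniteOrder Λ] [CommRing P]
    (hirr : ∀ s t : Λ, Relation.ReflTransGen (fun a b : Λ => a ≤ b ∨ b ≤ a) s t)
    (hP : ∃ p₁ p₂ : Pˣ, IsUnit ((p₁ : P) - (p₂ : P)))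
    (A : (IncidenceAlgebra P Λ)ˣ) :
    A ∈ Subgroup.center (IncidenceAlgebra P Λ)ˣ ↔
      ((∀ s t : Λ, (A : IncidenceAlgebra P Λ) s s = (A : IncidenceAlgebra P Λ) t t) ∧
        ∀ s t : Λ, s ≠ t → (A : IncidenceAlgebra P Λ) s t = 0) := by
  rw [Subgroup.mem_center_iff]
  constructor
  · intro hc
    -- commutation of the underlying elements with all units
    have hc' : ∀ g : (IncidenceAlgebra P Λ)ˣ,
        (g : IncidenceAlgebra P Λ) * A = A * g := fun g => by
      have := congrArg Units.val (hc g)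
      simpa [Units.val_mul] using this
    have key : ∀ s t : Λ, s ≤ t →
        (A : IncidenceAlgebra P Λ) s s = (A : IncidenceAlgebra P Λ) t t := by
      intro s t h
      by_cases hne : s = t
      · subst hne; rfl
      have h1 := hc' (singleUnit s t h hne)
      have h2 : single s t h * (A : IncidenceAlgebra P Λ)
          = (A : IncidenceAlgebra P Λ) * single s t h := by
        have h1' : ((1 : IncidenceAlgebra P Λ) + single s t h) * (A : IncidenceAlgebra P Λ)
            = (A : IncidenceAlgebra P Λ) * ((1 : IncidenceAlgebra P Λ) + single s t h) := h1
        rw [add_mul, one_mul, mul_add, mul_one] at h1'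
        exact add_left_cancel h1'
      have h3 : (single s t h * (A : IncidenceAlgebra P Λ) : IncidenceAlgebra P Λ) s t
          = ((A : IncidenceAlgebra P Λ) * single s t h : IncidenceAlgebra P Λ) s t := by
        rw [h2]
      rw [single_mul_apply s t h _ t h le_rfl, mul_single_apply s t h _ s le_rfl h] at h3
      exact h3.symm
    constructor
    · intro s t
      induction hirr s t with
      | refl => rfl
      | tail _ hr ih =>
          rename_i b c _
          rcases hr with hr | hr
          · exact ih.trans (key b c hr)
          · exact ih.trans (key c b hr).symm
    · intro u v huv
      by_cases hle : u ≤ v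
      · obtain ⟨p₁, p₂, hp⟩ := hP
        set d : Λ → Pˣ := fun a => if a = u then p₁ else p₂ with hd
        have h1 : diag d * (A : IncidenceAlgebra P Λ)
            = (A : IncidenceAlgebra P Λ) * diag d := hc' (diagUnit d)
        have h3 : (diag d * (A : IncidenceAlgebra P Λ) : IncidenceAlgebra P Λ) u v
            = ((A : IncidenceAlgebra P Λ) * diag d : IncidenceAlgebra P Λ) u v := by rw [h1]
        rw [diag_mul_apply _ _ _ _ hle, mul_diag_apply _ _ _ _ hle] at h3
        have hdu : d u = p₁ := by simp [hd]
        have hdv : d v = p₂ := by simp [hd, Ne.symm huv]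
        rw [hdu, hdv] at h3
        have : ((p₁ : P) - p₂) * (A : IncidenceAlgebra P Λ) u v = 0 := by
          rw [sub_mul, h3, mul_comm, sub_self]
        exact (hp.mul_right_eq_zero).1 this
      · exact IncidenceAlgebra.apply_eq_zero_of_not_le hle _
  · rintro ⟨hdiag, hoff⟩ g
    refine Units.ext ?_
    show (g : IncidenceAlgebra P Λ) * A = A * g
    ext a b hab
    rw [IncidenceAlgebra.mul_apply, IncidenceAlgebra.mul_apply]
    rw [Finset.sum_eq_single_of_mem b (mem_Icc.2 ⟨hab, le_rfl⟩)
      (fun x _ hxb => by rw [hoff x b hxb, mul_zero])]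
    rw [Finset.sum_eq_single_of_mem a (mem_Icc.2 ⟨le_rfl, hab⟩)
      (fun x _ hxa => by rw [hoff a x (Ne.symm hxa), zero_mul])]
    rw [hdiag b a, mul_comm]
end

section
/- Let Λ be a locally finite preordered set, P a commutative ring, and Λ' ⊆ Λ a convex subset. The map sending A ∈ GL_Λ(P) to its restriction (A_{s,t})_{s,t ∈ Λ'} is a surjective group homomorphism GL_Λ(P) → GL_{Λ'}(P), with kernel N^Λ_{Λ'} = {A : A_{s,s} = 1 for s ∈ Λ' and A_{s,t} = 0 for s ≠ t in Λ'}; hence GL_Λ(P)/N^Λ_{Λ'} ≅ GL_{Λ'}(P). -/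
/-!
Since `Λ'` is closed under intervals, every interval of `Λ'` is an interval of `Λ`, so the
convolution sums defining products in the two incidence algebras agree on `Λ'`: restriction is a
ring homomorphism and hence induces a homomorphism of unit groups, whose kernel is read off
entrywise. It is split by extending a function on `Λ'` by the identity elsewhere (a block-diagonal
matrix `diag(B, 1)`), which is multiplicative, hence maps units to units.
-/

open Finset

lemma Units.map_surjective_of_comp_eq_id {M N : Type*} [Monoid M] [Monoid N] {f : M →* N}
    (g : N →* M) (hfg : f.comp g = MonoidHom.id N) : Function.Surjective (Units.map f) :=
  fun u => ⟨Units.map g u, by rw [← MonoidHom.comp_apply, ← Units.map_comp, hfg, Units.map_id]; rfl⟩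

namespace IncidenceAlgebra

variable {𝕜 α : Type*} [Preorder α] (s : Set α)

section Restrict

variable [Zero 𝕜]

def restrict (f : IncidenceAlgebra 𝕜 α) : IncidenceAlgebra 𝕜 s :=
  ⟨fun a b => f a b, fun _ _ h => f.apply_eq_zero_of_not_le (by exact_mod_cast h)⟩

@[simp]
lemma restrict_apply (f : IncidenceAlgebra 𝕜 α) (a b : s) : restrict s f a b = f a b := rfl

lemma restrict_eq_one_iff [One 𝕜] [DecidableEq α] {f : IncidenceAlgebra 𝕜 α} :
    restrict s f = 1 ↔ (∀ a ∈ s, f a a = 1) ∧ ∀ a ∈ s, ∀ b ∈ s, a ≠ b → f a b = 0 := by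
  constructor
  · intro h
    have hf (a b : s) : f a b = if a = b then 1 else 0 := by
      rw [← restrict_apply, h, one_apply]
    exact ⟨fun a ha => by simpa using hf ⟨a, ha⟩ ⟨a, ha⟩,
      fun a ha b hb hab => by simpa [hab] using hf ⟨a, ha⟩ ⟨b, hb⟩⟩
  · rintro ⟨hdiag, hoff⟩
    ext a b _
    rcases eq_or_ne a b with rfl | hab
    · simp [hdiag a a.2]
    · simp [hab, hoff a a.2 b b.2 (Subtype.coe_ne_coe.2 hab)]

end Restrict

section ExtendByOne

variable [Zero 𝕜] [One 𝕜] [DecidableEq α] [DecidablePred (· ∈ s)]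

def extendByOne (g : IncidenceAlgebra 𝕜 s) : IncidenceAlgebra 𝕜 α where
  toFun a b := if h : a ∈ s ∧ b ∈ s then g ⟨a, h.1⟩ ⟨b, h.2⟩ else (1 : IncidenceAlgebra 𝕜 α) a b
  eq_zero_of_not_le' a b hab := by
    split_ifs
    · exact g.apply_eq_zero_of_not_le (by exact_mod_cast hab)
    · exact apply_eq_zero_of_not_le hab 1

variable {s}

lemma extendByOne_apply_of_mem (g : IncidenceAlgebra 𝕜 s) {a b : α} (ha : a ∈ s) (hb : b ∈ s) :
    extendByOne s g a b = g ⟨a, ha⟩ ⟨b, hb⟩ :=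
  dif_pos ⟨ha, hb⟩

lemma extendByOne_apply_of_notMem_left (g : IncidenceAlgebra 𝕜 s) {a : α} (ha : a ∉ s) (b : α) :
    extendByOne s g a b = (1 : IncidenceAlgebra 𝕜 α) a b :=
  dif_neg fun h => ha h.1

lemma extendByOne_apply_of_notMem_right (g : IncidenceAlgebra 𝕜 s) (a : α) {b : α} (hb : b ∉ s) :
    extendByOne s g a b = (1 : IncidenceAlgebra 𝕜 α) a b :=
  dif_neg fun h => hb h.2

@[simp]
lemma restrict_extendByOne (g : IncidenceAlgebra 𝕜 s) : restrict s (extendByOne s g) = g := by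
  ext a b _
  exact extendByOne_apply_of_mem g a.2 b.2

variable (s) in
lemma extendByOne_one : extendByOne s (1 : IncidenceAlgebra 𝕜 s) = 1 := by
  ext a b _
  by_cases ha : a ∈ s
  · by_cases hb : b ∈ s
    · simp [extendByOne_apply_of_mem _ ha hb, Subtype.ext_iff]
    · exact extendByOne_apply_of_notMem_right _ a hb
  · exact extendByOne_apply_of_notMem_left _ ha b

end ExtendByOne

variable [LocallyFiniteOrder α] [DecidablePred (· ∈ s)]

lemma map_subtype_embedding_Icc_of_ordConnected [s.OrdConnected] (a b : s) :
    (Icc a b).map (Function.Embedding.subtype (· ∈ s)) = Icc (a : α) b :=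
  map_subtype_embedding_Icc _ a b fun _ _ _ hax hxb ha hb => Set.Icc_subset s ha hb ⟨hax, hxb⟩

variable [Semiring 𝕜] [DecidableEq α] [s.OrdConnected]

variable (𝕜) in
def restrictRingHom : IncidenceAlgebra 𝕜 α →+* IncidenceAlgebra 𝕜 s where
  toFun := restrict s
  map_one' := by
    ext a b _
    simp [Subtype.ext_iff]
  map_mul' f g := by
    ext a b _
    rw [restrict_apply, mul_apply, mul_apply, ← map_subtype_embedding_Icc_of_ordConnected, sum_map]
    rfl
  map_zero' := rfl
  map_add' _ _ := rfl

lemma extendByOne_mul (g h : IncidenceAlgebra 𝕜 s) :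
    extendByOne s (g * h) = extendByOne s g * extendByOne s h := by
  ext a b _
  by_cases ha : a ∈ s
  · by_cases hb : b ∈ s
    · rw [extendByOne_apply_of_mem _ ha hb, mul_apply, mul_apply,
        ← map_subtype_embedding_Icc_of_ordConnected s ⟨a, ha⟩ ⟨b, hb⟩, sum_map]
      simp [extendByOne_apply_of_mem, ha, hb]
    · calc extendByOne s (g * h) a b = extendByOne s g a b := by
            rw [extendByOne_apply_of_notMem_right _ a hb, extendByOne_apply_of_notMem_right _ a hb]
        _ = (extendByOne s g * 1) a b := by rw [mul_one]
        _ = (extendByOne s g * extendByOne s h) a b := by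
            simp only [mul_apply, extendByOne_apply_of_notMem_right h _ hb]
  · calc extendByOne s (g * h) a b = extendByOne s h a b := by
          rw [extendByOne_apply_of_notMem_left _ ha, extendByOne_apply_of_notMem_left _ ha]
      _ = (1 * extendByOne s h) a b := by rw [one_mul]
      _ = (extendByOne s g * extendByOne s h) a b := by
          simp only [mul_apply, extendByOne_apply_of_notMem_left g ha]

variable (𝕜) in
def extendByOneMonoidHom : IncidenceAlgebra 𝕜 s →* IncidenceAlgebra 𝕜 α where
  toFun := extendByOne s
  map_one' := extendByOne_one s
  map_mul' := extendByOne_mul s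

variable (𝕜) in
lemma restrictRingHom_comp_extendByOneMonoidHom :
    (restrictRingHom 𝕜 s : IncidenceAlgebra 𝕜 α →* IncidenceAlgebra 𝕜 s).comp
      (extendByOneMonoidHom 𝕜 s) = MonoidHom.id _ :=
  MonoidHom.ext restrict_extendByOne

end IncidenceAlgebra

theorem stmt12_general {Λ P : Type*} [Preorder Λ] [LocallyFiniteOrder Λ] [DecidableEq Λ]
    [CommRing P] (Λ' : Set Λ) [DecidablePred (· ∈ Λ')]
    (hint : ∀ ⦃s t : Λ⦄, s ∈ Λ' → t ∈ Λ' → s ≤ t → Set.Icc s t ⊆ Λ') :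
    ∃ φ : (IncidenceAlgebra P Λ)ˣ →* (IncidenceAlgebra P ↥Λ')ˣ,
      (∀ (A : (IncidenceAlgebra P Λ)ˣ) (s t : ↥Λ'),
          ((φ A : IncidenceAlgebra P ↥Λ') s t =
            (A : IncidenceAlgebra P Λ) (s : Λ) (t : Λ))) ∧
      Function.Surjective φ ∧
      (∀ A : (IncidenceAlgebra P Λ)ˣ,
        A ∈ φ.ker ↔
          ((∀ s ∈ Λ', (A : IncidenceAlgebra P Λ) s s = 1) ∧
            ∀ s ∈ Λ', ∀ t ∈ Λ', s ≠ t → (A : IncidenceAlgebra P Λ) s t = 0)) := by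
  have : Λ'.OrdConnected := ⟨fun s hs t ht _ hx => hint hs ht (hx.1.trans hx.2) hx⟩
  refine ⟨Units.map (IncidenceAlgebra.restrictRingHom P Λ' : _ →* _), fun _ _ _ => rfl,
    Units.map_surjective_of_comp_eq_id _
      (IncidenceAlgebra.restrictRingHom_comp_extendByOneMonoidHom P Λ'), fun A => ?_⟩
  rw [MonoidHom.mem_ker, Units.ext_iff]
  exact IncidenceAlgebra.restrict_eq_one_iff Λ'

/-- Let `Λ` be a locally finite preordered set, `P` a commutative ring and `Λ' ⊆ Λ` a
convex subset (closed under intervals and connected by chains of comparabilities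
within `Λ'`).  Restriction of matrices to coordinates in `Λ'` is a surjective group
homomorphism `GL_Λ(P) → GL_{Λ'}(P)` whose kernel is the congruence subgroup
`N^Λ_{Λ'}`; hence `GL_Λ(P)/N^Λ_{Λ'} ≅ GL_{Λ'}(P)`. -/
theorem stmt12 {Λ P : Type*} [Preorder Λ] [LocallyFiniteOrder Λ] [DecidableEq Λ]
    [CommRing P] (Λ' : Set Λ) [DecidablePred (· ∈ Λ')]
    (hint : ∀ ⦃s t : Λ⦄, s ∈ Λ' → t ∈ Λ' → s ≤ t → Set.Icc s t ⊆ Λ')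
    (hconn : ∀ s t : ↥Λ',
      Relation.ReflTransGen (fun a b : ↥Λ' => a ≤ b ∨ b ≤ a) s t) :
    ∃ φ : (IncidenceAlgebra P Λ)ˣ →* (IncidenceAlgebra P ↥Λ')ˣ,
      (∀ (A : (IncidenceAlgebra P Λ)ˣ) (s t : ↥Λ'),
          ((φ A : IncidenceAlgebra P ↥Λ') s t =
            (A : IncidenceAlgebra P Λ) (s : Λ) (t : Λ))) ∧
      Function.Surjective φ ∧
      (∀ A : (IncidenceAlgebra P Λ)ˣ,
        A ∈ φ.ker ↔
          ((∀ s ∈ Λ', (A : IncidenceAlgebra P Λ) s s = 1) ∧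
            ∀ s ∈ Λ', ∀ t ∈ Λ', s ≠ t → (A : IncidenceAlgebra P Λ) s t = 0)) :=
  stmt12_general Λ' hint
end

section
/- Let Λ be an n-bounded locally finite partially ordered set (every N_1(s) = {t : t ≤ s or s ≤ t} has at most n elements) and P a commutative absolute topological ring. Then GL_Λ(P) is solvable, with GL_Λ(P)^{(n)} = {1}. -/
/-!
Let `G_k` be the set of units of the incidence algebra that agree with `1` on every interval
`[s, t]` with at most `k` elements. Each `G_k` is a subgroup, and it is closed because it is cut
out by conditions on single entries. Modulo `G_1` only the diagonal survives, and the diagonal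
is multiplicative with values in the commutative ring `P`, so `[G_0, G_0] ⊆ G_1`. For
`A = 1 + a ∈ G_j` and `B = 1 + b ∈ G_k`, the entry `(ab)(s, t) = ∑ a(s, u) b(u, t)` vanishes
when `|[s, t]| ≤ j + k` because `|[s, u]| + |[u, t]| ≤ |[s, t]| + 1`; hence
`[G_j, G_k] ⊆ G_{j+k}`. By induction the `k`-th term of the closed derived series lies in `G_k`,
and `n`-boundedness makes `G_n` trivial, since `[s, t] ⊆ N₁(s)`.
-/

open Finset Topology
open scoped commutatorElement

namespace IncidenceAlgebra

variable {Λ P : Type*} [PartialOrder Λ] [LocallyFiniteOrder Λ]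

lemma card_Icc_add_card_Icc_le {s t u : Λ} (hu : u ∈ Icc s t) :
    #(Icc s u) + #(Icc u t) ≤ #(Icc s t) + 1 := by
  classical
  rw [mem_Icc] at hu
  have hunion : Icc s u ∪ Icc u t ⊆ Icc s t := union_subset
    (Icc_subset_Icc_right hu.2) (Icc_subset_Icc_left hu.1)
  have hinter : Icc s u ∩ Icc u t ⊆ {u} := fun v hv => by
    simp only [mem_inter, mem_Icc] at hv
    exact mem_singleton.2 (le_antisymm hv.1.2 hv.2.1)
  calc #(Icc s u) + #(Icc u t) = #(Icc s u ∪ Icc u t) + #(Icc s u ∩ Icc u t) :=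
        (card_union_add_card_inter _ _).symm
    _ ≤ #(Icc s t) + #({u} : Finset Λ) := add_le_add (card_le_card hunion) (card_le_card hinter)
    _ = #(Icc s t) + 1 := by rw [card_singleton]

lemma card_Icc_le_ncard_comparable (s t : Λ) (hfin : {u | u ≤ s ∨ s ≤ u}.Finite) :
    #(Icc s t) ≤ {u | u ≤ s ∨ s ≤ u}.ncard := by
  rw [← Set.ncard_coe_finset]
  exact Set.ncard_le_ncard (fun u hu => Or.inr (mem_Icc.1 hu).1) hfin

def EqUpTo [Zero P] (k : ℕ) (f g : IncidenceAlgebra P Λ) : Prop :=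
  ∀ s t, #(Icc s t) ≤ k → f s t = g s t

namespace EqUpTo

variable {j k : ℕ}

section Zero

variable [Zero P] {f g h : IncidenceAlgebra P Λ}

lemma symm (hfg : EqUpTo k f g) : EqUpTo k g f := fun s t hst => (hfg s t hst).symm

lemma trans (hfg : EqUpTo k f g) (hgh : EqUpTo k g h) : EqUpTo k f h :=
  fun s t hst => (hfg s t hst).trans (hgh s t hst)

lemma mono (hjk : j ≤ k) (hfg : EqUpTo k f g) : EqUpTo j f g :=
  fun s t hst => hfg s t (hst.trans hjk)

lemma of_zero (f g : IncidenceAlgebra P Λ) : EqUpTo 0 f g := fun s t hst => by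
  have hst : ¬s ≤ t := fun hle => by simp_all
  rw [apply_eq_zero_of_not_le hst, apply_eq_zero_of_not_le hst]

lemma eq (hk : ∀ s t : Λ, #(Icc s t) ≤ k) (hfg : EqUpTo k f g) : f = g :=
  IncidenceAlgebra.ext fun s t _ => hfg s t (hk s t)

end Zero

variable [Semiring P]

lemma mul_right {f g : IncidenceAlgebra P Λ} (hfg : EqUpTo k f g)
    (h : IncidenceAlgebra P Λ) : EqUpTo k (f * h) (g * h) := fun s t hst => by
  simp only [mul_apply]
  refine sum_congr rfl fun u hu => ?_
  rw [hfg s u ((card_le_card (Icc_subset_Icc_right (mem_Icc.1 hu).2)).trans hst)]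

lemma mul_eqUpTo_zero {f g : IncidenceAlgebra P Λ} (hf : EqUpTo j f 0)
    (hg : EqUpTo k g 0) : EqUpTo (j + k) (f * g) 0 := fun s t hst => by
  refine (sum_eq_zero fun u hu => ?_).trans (zero_apply s t).symm
  by_cases hsu : #(Icc s u) ≤ j
  · rw [hf s u hsu, zero_apply, zero_mul]
  · have hut : #(Icc u t) ≤ k := by
      have := card_Icc_add_card_Icc_le hu
      omega
    rw [hg u t hut, zero_apply, mul_zero]

end EqUpTo

lemma eqUpTo_mul_comm_of_eqUpTo_one [DecidableEq Λ] [Ring P] {j k : ℕ}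
    {f g : IncidenceAlgebra P Λ} (hf : EqUpTo j f 1) (hg : EqUpTo k g 1) :
    EqUpTo (j + k) (f * g) (g * f) := fun s t hst => by
  have hf' : EqUpTo j (f - 1) 0 := fun u v huv => by simp [sub_apply, hf u v huv]
  have hg' : EqUpTo k (g - 1) 0 := fun u v huv => by simp [sub_apply, hg u v huv]
  have hcomm : f * g = g * f + ((f - 1) * (g - 1) - (g - 1) * (f - 1)) := by noncomm_ring
  rw [hcomm, add_apply, sub_apply, hf'.mul_eqUpTo_zero hg' s t hst,
    hg'.mul_eqUpTo_zero hf' s t (by omega), zero_apply, sub_self, add_zero]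

lemma eqUpTo_one_mul_comm [DecidableEq Λ] [CommRing P] (f g : IncidenceAlgebra P Λ) :
    EqUpTo 1 (f * g) (g * f) := fun s t hst => by
  by_cases hle : s ≤ t
  · obtain rfl : s = t := card_le_one.1 hst s (by simp [hle]) t (by simp [hle])
    simp only [mul_apply, Icc_self, sum_singleton, mul_comm]
  · rw [apply_eq_zero_of_not_le hle, apply_eq_zero_of_not_le hle]

section CongrSubgroup

def congrSubgroup (P Λ : Type*) [PartialOrder Λ] [LocallyFiniteOrder Λ] [DecidableEq Λ]
    [Semiring P] (k : ℕ) : Subgroup (IncidenceAlgebra P Λ)ˣ where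
  carrier := {A | EqUpTo k (A : IncidenceAlgebra P Λ) 1}
  mul_mem' {A B} (hA : EqUpTo k _ 1) (hB : EqUpTo k _ 1) := by
    show EqUpTo k ((A * B : (IncidenceAlgebra P Λ)ˣ) : IncidenceAlgebra P Λ) 1
    rw [Units.val_mul]
    exact (one_mul (B : IncidenceAlgebra P Λ) ▸ hA.mul_right B).trans hB
  one_mem' _ _ _ := rfl
  inv_mem' {A} (hA : EqUpTo k _ 1) := by
    show EqUpTo k ((A⁻¹ : (IncidenceAlgebra P Λ)ˣ) : IncidenceAlgebra P Λ) 1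
    simpa only [Units.mul_inv, one_mul] using (hA.mul_right ↑A⁻¹).symm

variable [DecidableEq Λ] [Semiring P] {k : ℕ}

lemma mem_congrSubgroup {A : (IncidenceAlgebra P Λ)ˣ} :
    A ∈ congrSubgroup P Λ k ↔ EqUpTo k (A : IncidenceAlgebra P Λ) 1 := Iff.rfl

lemma congrSubgroup_zero : congrSubgroup P Λ 0 = ⊤ :=
  eq_top_iff.2 fun _ _ => EqUpTo.of_zero _ _

lemma congrSubgroup_eq_bot (hk : ∀ s t : Λ, #(Icc s t) ≤ k) : congrSubgroup P Λ k = ⊥ :=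
  (Subgroup.eq_bot_iff_forall _).2 fun _ hA => Units.ext (hA.eq hk)

lemma mul_inv_mem_congrSubgroup {A B : (IncidenceAlgebra P Λ)ˣ}
    (hAB : EqUpTo k (A : IncidenceAlgebra P Λ) B) : A * B⁻¹ ∈ congrSubgroup P Λ k := by
  simpa only [mem_congrSubgroup, Units.val_mul, Units.mul_inv] using hAB.mul_right ↑B⁻¹

abbrev entrywiseTopology [TopologicalSpace P] : TopologicalSpace (IncidenceAlgebra P Λ)ˣ :=
  TopologicalSpace.induced (fun A => ⇑(A : IncidenceAlgebra P Λ)) Pi.topologicalSpace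

lemma isClosed_congrSubgroup [TopologicalSpace P] [T1Space P] (k : ℕ) :
    IsClosed[entrywiseTopology] (congrSubgroup P Λ k : Set (IncidenceAlgebra P Λ)ˣ) := by
  let := entrywiseTopology (P := P) (Λ := Λ)
  have hentry (s t : Λ) :
      Continuous fun A : (IncidenceAlgebra P Λ)ˣ => (A : IncidenceAlgebra P Λ) s t :=
    (continuous_apply t).comp ((continuous_apply s).comp continuous_induced_dom)
  change IsClosed {A : (IncidenceAlgebra P Λ)ˣ | ∀ s t, #(Icc s t) ≤ k → _}
  simp only [Set.ofPred_forall]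
  exact isClosed_iInter fun s => isClosed_iInter fun t => isClosed_iInter fun _ =>
    isClosed_singleton.preimage (hentry s t)

end CongrSubgroup

lemma commutatorElement_mem_congrSubgroup_succ [DecidableEq Λ] [CommRing P] {k : ℕ}
    {A B : (IncidenceAlgebra P Λ)ˣ} (hA : A ∈ congrSubgroup P Λ k)
    (hB : B ∈ congrSubgroup P Λ k) : ⁅A, B⁆ ∈ congrSubgroup P Λ (k + 1) := by
  have hcomm : EqUpTo (k + 1) ((A * B : (IncidenceAlgebra P Λ)ˣ) : IncidenceAlgebra P Λ)
      (B * A : (IncidenceAlgebra P Λ)ˣ) := by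
    simp only [Units.val_mul]
    rcases Nat.eq_zero_or_pos k with rfl | hk
    · exact eqUpTo_one_mul_comm _ _
    · exact (eqUpTo_mul_comm_of_eqUpTo_one hA hB).mono (by omega)
  simpa only [commutatorElement_def, mul_inv_rev, mul_assoc] using
    mul_inv_mem_congrSubgroup hcomm

end IncidenceAlgebra

theorem stmt16_general {Λ P : Type*} [PartialOrder Λ] [LocallyFiniteOrder Λ] [DecidableEq Λ]
    [CommRing P] [τP : TopologicalSpace P] [T2Space P]
    (n : ℕ)
    (hbound : ∀ s : Λ, {t : Λ | t ≤ s ∨ s ≤ t}.Finite ∧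
      {t : Λ | t ≤ s ∨ s ≤ t}.ncard ≤ n)
    (D : ℕ → Set (IncidenceAlgebra P Λ)ˣ)
    (hD0 : D 0 = Set.univ)
    (hDsucc : ∀ k, D (k + 1) =
      @closure (IncidenceAlgebra P Λ)ˣ
        (TopologicalSpace.induced
          (fun A : (IncidenceAlgebra P Λ)ˣ => ⇑(A : IncidenceAlgebra P Λ))
          Pi.topologicalSpace)
        ↑(Subgroup.closure
          {x : (IncidenceAlgebra P Λ)ˣ |
            ∃ a ∈ D k, ∃ b ∈ D k, x = a * b * a⁻¹ * b⁻¹})) :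
    D n = {1} := by
  let := IncidenceAlgebra.entrywiseTopology (P := P) (Λ := Λ)
  have hD_le : ∀ k, D k ⊆ IncidenceAlgebra.congrSubgroup P Λ k := by
    intro k
    induction k with
    | zero => simp [hD0, IncidenceAlgebra.congrSubgroup_zero]
    | succ k ih =>
      rw [hDsucc k]
      refine closure_minimal ((Subgroup.closure_le _).2 ?_)
        (IncidenceAlgebra.isClosed_congrSubgroup (k + 1))
      rintro _ ⟨a, ha, b, hb, rfl⟩
      exact IncidenceAlgebra.commutatorElement_mem_congrSubgroup_succ (ih ha) (ih hb)
  have one_mem : ∀ k, (1 : (IncidenceAlgebra P Λ)ˣ) ∈ D k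
    | 0 => hD0 ▸ Set.mem_univ _
    | k + 1 => hDsucc k ▸ subset_closure (Subgroup.one_mem _)
  have hGn : IncidenceAlgebra.congrSubgroup P Λ n = ⊥ :=
    IncidenceAlgebra.congrSubgroup_eq_bot fun s t =>
      (IncidenceAlgebra.card_Icc_le_ncard_comparable s t (hbound s).1).trans (hbound s).2
  refine Set.eq_singleton_iff_unique_mem.2 ⟨one_mem n, fun A hA => ?_⟩
  simpa [hGn] using hD_le n hA

/-- Let `Λ` be an `n`-bounded locally finite partially ordered set (every
`N₁(s) = {t : t ≤ s ∨ s ≤ t}` has at most `n` elements) and `P` a commutative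
absolute topological ring.  Then `GL_Λ(P)` is solvable: the `n`-th term of its closed
derived series is trivial. -/
theorem stmt16 {Λ P : Type*} [PartialOrder Λ] [LocallyFiniteOrder Λ] [DecidableEq Λ]
    [CommRing P] [τP : TopologicalSpace P] [IsTopologicalRing P] [T2Space P]
    (habs : @ContinuousInv Pˣ
      (TopologicalSpace.induced (Units.val : Pˣ → P) τP) inferInstance)
    (n : ℕ)
    (hbound : ∀ s : Λ, {t : Λ | t ≤ s ∨ s ≤ t}.Finite ∧
      {t : Λ | t ≤ s ∨ s ≤ t}.ncard ≤ n)
    (D : ℕ → Set (IncidenceAlgebra P Λ)ˣ)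
    (hD0 : D 0 = Set.univ)
    (hDsucc : ∀ k, D (k + 1) =
      @closure (IncidenceAlgebra P Λ)ˣ
        (TopologicalSpace.induced
          (fun A : (IncidenceAlgebra P Λ)ˣ => ⇑(A : IncidenceAlgebra P Λ))
          Pi.topologicalSpace)
        ↑(Subgroup.closure
          {x : (IncidenceAlgebra P Λ)ˣ |
            ∃ a ∈ D k, ∃ b ∈ D k, x = a * b * a⁻¹ * b⁻¹})) :
    D n = {1} :=
  stmt16_general (τP := τP) n hbound D hD0 hDsucc
end

section
/- Let Λ be an infinite irreducible preordered set with finite neighborhoods (N_1(s) finite for all s) and P a finite commutative ring with the discrete topology. Then the quasicentre QZ(GL_Λ(P)) = {g : the centralizer C(g) is open} is dense in the profinite group GL_Λ(P). -/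
/-!
Truncating `g ∈ GL_Λ(P)` to a finite order-convex set `S` (keeping the entries of `g` on `S × S`
and those of the identity elsewhere) is multiplicative, so it produces units which converge to `g`
as `S` grows. A truncation `t` differs from `1` only on `S × S`, so the commutator `f t - t f`
only sees the entries of `f` between elements comparable with points of `S`. As neighbourhoods
are finite, these are finitely many coordinates, and the centralizer of `t` is open.
-/

open Finset Filter Topology

namespace Finset

variable {Λ : Type*} [Preorder Λ] [LocallyFiniteOrder Λ] [DecidableEq Λ]

def ordConnectedHull (S : Finset Λ) : Finset Λ :=
  (S ×ˢ S).biUnion fun p => Icc p.1 p.2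

lemma subset_ordConnectedHull (S : Finset Λ) : S ⊆ S.ordConnectedHull := fun a ha =>
  mem_biUnion.2 ⟨(a, a), mem_product.2 ⟨ha, ha⟩, left_mem_Icc.2 le_rfl⟩

lemma ordConnected_ordConnectedHull (S : Finset Λ) :
    (S.ordConnectedHull : Set Λ).OrdConnected := by
  refine ⟨fun a ha b hb c hc => ?_⟩
  obtain ⟨p, hp, hap⟩ := mem_biUnion.1 ha
  obtain ⟨q, hq, hbq⟩ := mem_biUnion.1 hb
  exact mem_biUnion.2 ⟨(p.1, q.2), mem_product.2 ⟨(mem_product.1 hp).1, (mem_product.1 hq).2⟩,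
    mem_Icc.2 ⟨(mem_Icc.1 hap).1.trans hc.1, hc.2.trans (mem_Icc.1 hbq).2⟩⟩

end Finset

lemma eventually_forall_mem_apply_eq {ι κ P : Type*} [TopologicalSpace P] [DiscreteTopology P]
    {I : Set ι} {K : Set κ} (hI : I.Finite) (hK : K.Finite) (F : ι → κ → P) :
    ∀ᶠ G in 𝓝 F, ∀ a ∈ I, ∀ b ∈ K, G a b = F a b := by
  refine (eventually_all_finite hI).2 fun a _ => (eventually_all_finite hK).2 fun b _ => ?_
  have hcont : Continuous fun G : ι → κ → P => G a b :=
    (continuous_apply b).comp (continuous_apply a)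
  simpa only [nhds_discrete, tendsto_pure] using hcont.tendsto F

namespace IncidenceAlgebra

variable {Λ P : Type*} [Preorder Λ] [DecidableEq Λ]

section Truncate

variable [Semiring P]

def truncate (f : IncidenceAlgebra P Λ) (S : Finset Λ) : IncidenceAlgebra P Λ :=
  ⟨fun a b => if a ∈ S ∧ b ∈ S then f a b else (1 : IncidenceAlgebra P Λ) a b,
    fun a b hab => by split_ifs <;> exact apply_eq_zero_of_not_le hab _⟩

variable {f : IncidenceAlgebra P Λ} {S : Finset Λ} {a b : Λ}

lemma truncate_apply_of_mem (ha : a ∈ S) (hb : b ∈ S) : truncate f S a b = f a b :=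
  if_pos ⟨ha, hb⟩

lemma truncate_apply_of_not_mem (h : a ∉ S ∨ b ∉ S) :
    truncate f S a b = (1 : IncidenceAlgebra P Λ) a b :=
  if_neg fun hab => h.elim (· hab.1) (· hab.2)

lemma mem_of_truncate_apply_ne (h : truncate f S a b ≠ (1 : IncidenceAlgebra P Λ) a b) :
    a ∈ S ∧ b ∈ S := by
  by_contra hab
  exact h (truncate_apply_of_not_mem (not_and_or.1 hab))

lemma truncate_one (S : Finset Λ) : truncate (1 : IncidenceAlgebra P Λ) S = 1 := by
  ext a b
  exact ite_self _

variable [LocallyFiniteOrder Λ]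

lemma truncate_mul (hS : (S : Set Λ).OrdConnected) (f g : IncidenceAlgebra P Λ) :
    truncate (f * g) S = truncate f S * truncate g S := by
  ext a b hab
  by_cases ha : a ∈ S
  · by_cases hb : b ∈ S
    · rw [truncate_apply_of_mem ha hb, mul_apply, mul_apply]
      refine sum_congr rfl fun x hx => ?_
      have hxS : x ∈ S := hS.out ha hb (mem_Icc.1 hx)
      rw [truncate_apply_of_mem ha hxS, truncate_apply_of_mem hxS hb]
    · calc truncate (f * g) S a b = (truncate f S * 1) a b := by
            rw [mul_one, truncate_apply_of_not_mem (.inr hb), truncate_apply_of_not_mem (.inr hb)]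
        _ = (truncate f S * truncate g S) a b := by
            simp only [mul_apply]
            refine sum_congr rfl fun x _ => ?_
            rw [truncate_apply_of_not_mem (.inr hb)]
  · calc truncate (f * g) S a b = (1 * truncate g S) a b := by
          rw [one_mul, truncate_apply_of_not_mem (.inl ha), truncate_apply_of_not_mem (.inl ha)]
      _ = (truncate f S * truncate g S) a b := by
          simp only [mul_apply]
          refine sum_congr rfl fun x _ => ?_
          rw [truncate_apply_of_not_mem (.inl ha)]

def truncateHom (S : Finset Λ) (hS : (S : Set Λ).OrdConnected) :
    IncidenceAlgebra P Λ →* IncidenceAlgebra P Λ where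
  toFun f := truncate f S
  map_one' := truncate_one S
  map_mul' := truncate_mul hS

lemma tendsto_truncate_ordConnectedHull [TopologicalSpace P] [DiscreteTopology P]
    (f : IncidenceAlgebra P Λ) :
    Tendsto (fun S : Finset Λ => ⇑(truncate f S.ordConnectedHull)) atTop (𝓝 ⇑f) := by
  refine tendsto_pi_nhds.2 fun a => tendsto_pi_nhds.2 fun b => ?_
  rw [nhds_discrete, tendsto_pure]
  filter_upwards [eventually_ge_atTop {a, b}] with S hS
  exact truncate_apply_of_mem (S.subset_ordConnectedHull (hS (by simp)))
    (S.subset_ordConnectedHull (hS (by simp)))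

end Truncate

variable [LocallyFiniteOrder Λ] [Ring P]

lemma mul_sub_mul_congr {t : IncidenceAlgebra P Λ} {S N : Set Λ}
    (ht : ∀ a b, t a b ≠ (1 : IncidenceAlgebra P Λ) a b → a ∈ S ∧ b ∈ S)
    (hN : ∀ s ∈ S, ∀ a, a ≤ s ∨ s ≤ a → a ∈ N) {f f' : IncidenceAlgebra P Λ}
    (hff' : ∀ a ∈ N, ∀ b ∈ N, f a b = f' a b) :
    f * t - t * f = f' * t - t * f' := by
  set n := t - 1
  have hn : ∀ a b, n a b ≠ 0 → a ∈ S ∧ b ∈ S := fun a b h => ht a b (sub_ne_zero.1 h)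
  have hleft : f * n = f' * n := by
    ext a b
    simp only [mul_apply]
    refine sum_congr rfl fun x hx => ?_
    by_cases hx0 : n x b = 0
    · rw [hx0, mul_zero, mul_zero]
    · have hxS := (hn x b hx0).1
      rw [hff' a (hN x hxS a (.inl (mem_Icc.1 hx).1)) x (hN x hxS x (.inl le_rfl))]
  have hright : n * f = n * f' := by
    ext a b
    simp only [mul_apply]
    refine sum_congr rfl fun x hx => ?_
    by_cases hx0 : n a x = 0
    · rw [hx0, zero_mul, zero_mul]
    · have hxS := (hn a x hx0).2
      rw [hff' x (hN x hxS x (.inl le_rfl)) b (hN x hxS b (.inr (mem_Icc.1 hx).2))]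
  have hcomm : ∀ g : IncidenceAlgebra P Λ, g * t - t * g = g * n - n * g := fun g => by
    simp only [n, mul_sub, sub_mul, mul_one, one_mul, sub_sub_sub_cancel_right]
  rw [hcomm, hcomm, hleft, hright]

theorem isOpen_setOf_mul_eq_mul [TopologicalSpace P] [DiscreteTopology P]
    (hnbhd : ∀ s : Λ, {t : Λ | t ≤ s ∨ s ≤ t}.Finite) {u : (IncidenceAlgebra P Λ)ˣ} {S : Set Λ}
    (hS : S.Finite)
    (hu : ∀ a b, (u : IncidenceAlgebra P Λ) a b ≠ (1 : IncidenceAlgebra P Λ) a b →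
      a ∈ S ∧ b ∈ S) :
    IsOpen[.induced (fun A : (IncidenceAlgebra P Λ)ˣ => ⇑(A : IncidenceAlgebra P Λ))
      Pi.topologicalSpace] {h | h * u = u * h} := by
  let : TopologicalSpace (IncidenceAlgebra P Λ)ˣ :=
    .induced (fun A => ⇑(A : IncidenceAlgebra P Λ)) Pi.topologicalSpace
  set N := ⋃ s ∈ S, {a | a ≤ s ∨ s ≤ a}
  have hN : N.Finite := hS.biUnion fun s _ => hnbhd s
  have hSN : ∀ s ∈ S, ∀ a, a ≤ s ∨ s ≤ a → a ∈ N := fun s hs a ha =>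
    Set.mem_biUnion hs ha
  refine isOpen_iff_mem_nhds.2 fun h hh => ?_
  rw [nhds_induced]
  refine mem_comap.2 ⟨_, eventually_forall_mem_apply_eq hN hN ⇑(h : IncidenceAlgebra P Λ),
    fun h' hh' => ?_⟩
  have hcomm := mul_sub_mul_congr hu hSN hh'
  rw [Set.mem_ofPred_eq, Units.ext_iff, Units.val_mul, Units.val_mul, ← sub_eq_zero, hcomm,
    sub_eq_zero, ← Units.val_mul, ← Units.val_mul, ← Units.ext_iff]
  exact hh

end IncidenceAlgebra

open IncidenceAlgebra

theorem stmt19_general {Λ P : Type*} [Preorder Λ] [LocallyFiniteOrder Λ] [DecidableEq Λ]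
    [CommRing P]
    (hnbhd : ∀ s : Λ, {t : Λ | t ≤ s ∨ s ≤ t}.Finite) :
    letI : TopologicalSpace P := ⊥
    letI : TopologicalSpace (IncidenceAlgebra P Λ)ˣ :=
      TopologicalSpace.induced
        (fun A : (IncidenceAlgebra P Λ)ˣ => ⇑(A : IncidenceAlgebra P Λ))
        Pi.topologicalSpace
    Dense {g : (IncidenceAlgebra P Λ)ˣ |
      IsOpen {h : (IncidenceAlgebra P Λ)ˣ | h * g = g * h}} := by
  let : TopologicalSpace P := ⊥
  have : DiscreteTopology P := ⟨rfl⟩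
  let : TopologicalSpace (IncidenceAlgebra P Λ)ˣ :=
    .induced (fun A => ⇑(A : IncidenceAlgebra P Λ)) Pi.topologicalSpace
  intro g
  let approx (S : Finset Λ) : (IncidenceAlgebra P Λ)ˣ :=
    Units.map (truncateHom S.ordConnectedHull S.ordConnected_ordConnectedHull) g
  refine mem_closure_of_tendsto (f := approx) (b := atTop) ?_ (.of_forall fun S => ?_)
  · rw [nhds_induced, tendsto_comap_iff]
    exact tendsto_truncate_ordConnectedHull (g : IncidenceAlgebra P Λ)
  · exact isOpen_setOf_mul_eq_mul hnbhd S.ordConnectedHull.finite_toSet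
      fun a b => mem_of_truncate_apply_ne

/-- Let `Λ` be an infinite irreducible locally finite preordered set with finite
neighbourhoods (`N₁(s)` finite for all `s`) and `P` a finite commutative ring with
the discrete topology.  Then the quasicentre
`QZ(GL_Λ(P)) = {g : the centralizer of g is open}` is dense in `GL_Λ(P)` (topologized
as a subspace of the product `P^{Λ×Λ}`). -/
theorem stmt19 {Λ P : Type*} [Preorder Λ] [LocallyFiniteOrder Λ] [DecidableEq Λ]
    [Infinite Λ] [CommRing P] [Finite P]
    (hirr : ∀ s t : Λ, Relation.ReflTransGen (fun a b : Λ => a ≤ b ∨ b ≤ a) s t)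
    (hnbhd : ∀ s : Λ, {t : Λ | t ≤ s ∨ s ≤ t}.Finite) :
    letI : TopologicalSpace P := ⊥
    letI : TopologicalSpace (IncidenceAlgebra P Λ)ˣ :=
      TopologicalSpace.induced
        (fun A : (IncidenceAlgebra P Λ)ˣ => ⇑(A : IncidenceAlgebra P Λ))
        Pi.topologicalSpace
    Dense {g : (IncidenceAlgebra P Λ)ˣ |
      IsOpen {h : (IncidenceAlgebra P Λ)ˣ | h * g = g * h}} :=
  stmt19_general hnbhd
end
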